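/- For all natural numbers d, i and every n ≥ 1, the numbers A_d(i,n) satisfy the recursion A_d(i,n) = Σ_{r+s+t=d, r+s≤i} (d!/(r!·s!·t!)) · A_{d−r}(i−r−s, n−1), where the sum is over triples (r,s,t) of natural numbers with r+s+t = d and r+s ≤ i, and d!/(r!s!t!) is the multinomial coefficient. -/

import Mathlib

/-!
`A_d(i,n)` is the coefficient of `Xⁱ` in `((X + 1)ⁿ - 1)ᵈ`. With `Q = (X + 1)ⁿ⁻¹ - 1` one has
`(X + 1)ⁿ - 1 = X + X·Q + Q`, and the trinomial theorem gives
`(X + X·Q + Q)ᵈ = Σ_{r+s+t=d} d!/(r! s! t!) · X^(r+s) · Q^(d-r)`; comparing coefficients of `Xⁱ`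
is the recursion.
-/

/-- `A_d(i,n) = Σ_{i₁+⋯+i_d = i, each i_s ≥ 1} C(n,i₁)⋯C(n,i_d)`, the sum over all
`d`-tuples of positive integers summing to `i` of products of binomial coefficients. -/
def Acoef (d i n : ℕ) : ℕ :=
  ∑ f ∈ (Finset.Nat.antidiagonalTuple d i).filter (fun f => ∀ s, 1 ≤ f s),
    ∏ s, n.choose (f s)

open Finset Polynomial
open scoped Nat

theorem Finset.Nat.sum_antidiagonalTuple_succ {M : Type*} [AddCommMonoid M] (k n : ℕ)
    (g : (Fin (k + 1) → ℕ) → M) :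
    ∑ f ∈ antidiagonalTuple (k + 1) n, g f =
      ∑ p ∈ antidiagonal n, ∑ f ∈ antidiagonalTuple k p.2, g (Fin.cons p.1 f) := by
  rw [sum_sigma']
  refine sum_nbij' (fun f => ⟨(f 0, n - f 0), Fin.tail f⟩) (fun x => Fin.cons x.1.1 x.2)
    ?_ ?_ ?_ ?_ ?_
  · intro f hf
    simp only [Nat.mem_antidiagonalTuple, Fin.sum_univ_succ] at hf
    simp only [mem_sigma, HasAntidiagonal.mem_antidiagonal, Nat.mem_antidiagonalTuple]
    exact ⟨by omega, by simp only [Fin.tail]; omega⟩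
  · rintro ⟨⟨a, b⟩, f⟩ hx
    simp only [mem_sigma, HasAntidiagonal.mem_antidiagonal, Nat.mem_antidiagonalTuple] at hx
    simp only [Nat.mem_antidiagonalTuple, Fin.sum_univ_succ, Fin.cons_zero,
      Fin.cons_succ]
    omega
  · intro f _
    exact Fin.cons_self_tail f
  · rintro ⟨⟨a, b⟩, f⟩ hx
    simp only [mem_sigma, HasAntidiagonal.mem_antidiagonal, Nat.mem_antidiagonalTuple] at hx
    simp only [Fin.cons_zero, Fin.tail_cons]
    congr
    omega
  · intro f _
    simp only [Fin.cons_self_tail]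

theorem Polynomial.coeff_pow_eq_sum_antidiagonalTuple {R : Type*} [CommSemiring R] (p : R[X])
    (d i : ℕ) : (p ^ d).coeff i = ∑ f ∈ Nat.antidiagonalTuple d i, ∏ s, p.coeff (f s) := by
  induction d generalizing i with
  | zero => cases i <;> simp [coeff_one]
  | succ d ih =>
    simp only [pow_succ', coeff_mul, ih, Nat.sum_antidiagonalTuple_succ, Fin.prod_univ_succ,
      Fin.cons_zero, Fin.cons_succ, mul_sum]

theorem Polynomial.coeff_X_add_one_pow_sub_one {R : Type*} [Ring R] (n k : ℕ) :
    ((X + 1) ^ n - 1 : R[X]).coeff k = if k = 0 then 0 else (n.choose k : R) := by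
  split_ifs with hk <;> simp [coeff_X_add_one_pow, coeff_one, hk]

theorem Acoef_eq_coeff_pow (R : Type*) [CommRing R] (d i n : ℕ) :
    (Acoef d i n : R) = (((X + 1) ^ n - 1 : R[X]) ^ d).coeff i := by
  rw [coeff_pow_eq_sum_antidiagonalTuple, Acoef, sum_filter]
  push_cast
  refine sum_congr rfl fun f _ => ?_
  simp only [coeff_X_add_one_pow_sub_one]
  split_ifs with hf
  · exact prod_congr rfl fun s _ => by rw [if_neg (by have := hf s; omega)]
  · push Not at hf
    obtain ⟨s, hs⟩ := hf
    exact (prod_eq_zero (mem_univ s) (by rw [if_pos (by omega)])).symm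

def antidiagonalTriple (d : ℕ) : Finset (ℕ × ℕ × ℕ) :=
  (range (d + 1) ×ˢ range (d + 1) ×ˢ range (d + 1)).filter (fun x => x.1 + x.2.1 + x.2.2 = d)

theorem add_add_pow {R : Type*} [CommSemiring R] (a b c : R) (d : ℕ) :
    (a + b + c) ^ d = ∑ x ∈ antidiagonalTriple d,
      ((d ! / (x.1 ! * x.2.1 ! * x.2.2 !) : ℕ) : R) * (a ^ x.1 * b ^ x.2.1 * c ^ x.2.2) := by
  have habc : a + b + c = ∑ j, ![a, b, c] j := by simp [Fin.sum_univ_three]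
  rw [habc, sum_pow_eq_sum_piAntidiag, piAntidiag_univ_fin_eq_antidiagonalTuple]
  refine sum_nbij' (fun k => (k 0, k 1, k 2)) (fun x => ![x.1, x.2.1, x.2.2]) ?_ ?_ ?_ ?_ ?_
  · intro k hk
    simp only [Nat.mem_antidiagonalTuple, Fin.sum_univ_three] at hk
    simp only [antidiagonalTriple, mem_filter, mem_product, mem_range]
    omega
  · intro x hx
    simp only [antidiagonalTriple, mem_filter] at hx
    simp [Nat.mem_antidiagonalTuple, Fin.sum_univ_three, hx.2]
  · intro k _
    ext j
    fin_cases j <;> rfl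
  · intro x _
    rfl
  · intro k hk
    have hk3 : k = ![k 0, k 1, k 2] := by ext j; fin_cases j <;> rfl
    rw [Nat.mem_antidiagonalTuple, Fin.sum_univ_three] at hk
    rw [hk3, Nat.multinomial_univ_three, hk, Fin.prod_univ_three]
    simp

theorem Polynomial.coeff_X_add_X_mul_add_pow {R : Type*} [CommRing R] (Q : R[X]) (d i : ℕ) :
    ((X + X * Q + Q) ^ d).coeff i = ∑ x ∈ antidiagonalTriple d,
      if x.1 + x.2.1 ≤ i then
        ((d ! / (x.1 ! * x.2.1 ! * x.2.2 !) : ℕ) : R) * (Q ^ (d - x.1)).coeff (i - x.1 - x.2.1)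
      else 0 := by
  rw [add_add_pow, finsetSum_coeff]
  refine sum_congr rfl fun x hx => ?_
  have hst : x.2.1 + x.2.2 = d - x.1 := by
    simp only [antidiagonalTriple, mem_filter] at hx
    omega
  have hmonomial : X ^ x.1 * (X * Q) ^ x.2.1 * Q ^ x.2.2 = X ^ (x.1 + x.2.1) * Q ^ (d - x.1) := by
    rw [← hst]
    ring
  rw [hmonomial, coeff_natCast_mul, coeff_X_pow_mul', Nat.sub_sub, mul_ite, mul_zero]

/-- The recursion for the numbers `A_d(i,n)` (used in the proof of
Lemma 3.3 (inter-mult-lem3)): for `n ≥ 1`,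
`A_d(i,n) = Σ_{r+s+t=d, r+s≤i} (d!/(r!·s!·t!)) · A_{d−r}(i−r−s, n−1)`. -/
theorem stmt7 (d i n : ℕ) (hn : 1 ≤ n) :
    Acoef d i n =
      ∑ rst ∈ (Finset.range (d + 1) ×ˢ Finset.range (d + 1) ×ˢ Finset.range (d + 1)).filter
          (fun rst => rst.1 + rst.2.1 + rst.2.2 = d ∧ rst.1 + rst.2.1 ≤ i),
        d.factorial / (rst.1.factorial * rst.2.1.factorial * rst.2.2.factorial) *
          Acoef (d - rst.1) (i - rst.1 - rst.2.1) (n - 1) := by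
  obtain ⟨m, rfl⟩ := Nat.exists_eq_add_of_le' hn
  have hsplit :
      ((X + 1) ^ (m + 1) - 1 : ℤ[X]) = X + X * ((X + 1) ^ m - 1) + ((X + 1) ^ m - 1) := by
    ring
  have h := Acoef_eq_coeff_pow ℤ d i (m + 1)
  rw [hsplit, coeff_X_add_X_mul_add_pow] at h
  simp only [← Acoef_eq_coeff_pow] at h
  rw [← filter_filter, sum_filter, Nat.add_sub_cancel]
  exact_mod_cast h
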